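/- Fix p, q ∈ ℝ. The Hessian determinant of F at the singular point (p,q) satisfies (F_xx·F_yy − F_xy²)(p,q) = −4(4p + q²), and (p,q) is an isolated point of Beloch's curve 𝓕 — i.e., there exists ε > 0 such that every (x,y) with F(x,y) = 0 and ‖(x,y) − (p,q)‖ < ε equals (p,q) — if and only if 4p + q² < 0. -/

import Mathlib

/-- Beloch's polynomial `F(x,y)` associated with `P = (p,q)`. -/
def belochF (p q x y : ℝ) : ℝ :=
  2 * (q - y) ^ 2 - (q + y) * (q - y) * (p - x) - (p - x) ^ 2 * (p + x)

/-!
In the coordinates `u = x - p`, `v = y - q` the polynomial is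
`F = Q(u, v) - u (u² + v²)` with the quadratic form `Q = 2v² - 2quv - 2pu²`, whose
discriminant is `4p + q²`. If `4p + q² < 0`, then `Q` is positive definite, so `Q ≥ c r²` for
some `c > 0`, while the cubic term is at most `r³`; hence `F` has no zero with `0 < r < c`.
If `4p + q² ≥ 0`, the lines `v = t u` through the singular point give the rational
parametrisation `u (1 + t²) = 2 (t² - qt - p)` of the curve, and letting `t` tend to a real root
of `t² - qt - p` produces points of the curve other than `(p, q)` converging to `(p, q)`.
-/

open Filter Topology

theorem deriv_belochF_fst (p q y : ℝ) :
    deriv (fun x => belochF p q x y) = fun x => q ^ 2 - y ^ 2 + (p - x) * (p + 3 * x) := by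
  ext x
  simp (disch := fun_prop) [belochF, deriv_fun_sub, deriv_fun_mul]
  ring

theorem deriv_belochF_snd (p q x : ℝ) :
    deriv (fun y => belochF p q x y) = fun y => 4 * (y - q) + 2 * y * (p - x) := by
  ext y
  simp (disch := fun_prop) [belochF, deriv_fun_sub, deriv_fun_mul]
  ring

theorem deriv_deriv_belochF_fst (p q y : ℝ) :
    deriv (deriv fun x => belochF p q x y) = fun x => 2 * p - 6 * x := by
  ext x
  simp (disch := fun_prop) [deriv_belochF_fst, deriv_fun_mul]
  ring

theorem deriv_deriv_belochF_snd (p q x : ℝ) :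
    deriv (deriv fun y => belochF p q x y) = fun _ => 4 + 2 * (p - x) := by
  ext y
  simp (disch := fun_prop) [deriv_belochF_snd, deriv_fun_mul]

theorem deriv_deriv_belochF_fst_snd (p q x : ℝ) :
    deriv (fun y => deriv (fun x => belochF p q x y) x) = fun y => -2 * y := by
  ext y
  simp [deriv_belochF_fst]

def belochQuad (p q u v : ℝ) : ℝ :=
  2 * v ^ 2 - 2 * q * u * v - 2 * p * u ^ 2

theorem belochF_add (p q u v : ℝ) :
    belochF p q (p + u) (q + v) = belochQuad p q u v - u * (u ^ 2 + v ^ 2) := by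
  unfold belochF belochQuad
  ring

theorem belochQuad_lower_bound {p q : ℝ} (h : 4 * p + q ^ 2 ≤ 0) (u v : ℝ) :
    -(4 * p + q ^ 2) * (u ^ 2 + v ^ 2) ≤ (2 - 4 * p) * belochQuad p q u v := by
  unfold belochQuad
  nlinarith [mul_nonneg (add_nonneg (sq_nonneg q) zero_le_two) (sq_nonneg (2 * v - q * u)),
    sq_nonneg ((4 * p + q ^ 2) * u), mul_nonneg (neg_nonneg.mpr h) (sq_nonneg (v - q * u))]

theorem belochF_isolated {p q : ℝ} (h : 4 * p + q ^ 2 < 0) :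
    ∃ ε > (0 : ℝ), ∀ x y : ℝ, belochF p q x y = 0 →
      √((x - p) ^ 2 + (y - q) ^ 2) < ε → (x, y) = (p, q) := by
  have hc : 0 < 2 - 4 * p := by nlinarith [sq_nonneg q]
  refine ⟨-(4 * p + q ^ 2) / (2 - 4 * p), div_pos (by linarith) hc, fun x y hF hr => ?_⟩
  obtain ⟨u, rfl⟩ : ∃ u, x = p + u := ⟨x - p, by ring⟩
  obtain ⟨v, rfl⟩ : ∃ v, y = q + v := ⟨y - q, by ring⟩
  simp only [add_sub_cancel_left] at hr
  rw [belochF_add] at hF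
  set r := √(u ^ 2 + v ^ 2)
  have hr2 : r ^ 2 = u ^ 2 + v ^ 2 := Real.sq_sqrt (by positivity)
  have hur : u ≤ r := (le_abs_self u).trans (Real.abs_le_sqrt (le_add_of_nonneg_right (sq_nonneg v)))
  have hrc : (2 - 4 * p) * r < -(4 * p + q ^ 2) := by rwa [lt_div_iff₀' hc] at hr
  have hr_zero : r = 0 := by
    by_contra hne
    have hpos : 0 < r ^ 2 := by positivity
    have hlt : -(4 * p + q ^ 2) * r ^ 2 < -(4 * p + q ^ 2) * r ^ 2 := calc
      _ ≤ (2 - 4 * p) * belochQuad p q u v := hr2 ▸ belochQuad_lower_bound h.le u v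
      _ = (2 - 4 * p) * u * r ^ 2 := by rw [hr2]; linear_combination (2 - 4 * p) * hF
      _ ≤ (2 - 4 * p) * r * r ^ 2 := by gcongr
      _ < _ := mul_lt_mul_of_pos_right hrc hpos
    exact lt_irrefl _ hlt
  have hu : u = 0 := by nlinarith [sq_nonneg u, sq_nonneg v]
  have hv : v = 0 := by nlinarith [sq_nonneg u, sq_nonneg v]
  simp [hu, hv]

theorem belochF_add_mul_eq_zero {p q t u : ℝ} (h : u * (1 + t ^ 2) = 2 * (t ^ 2 - q * t - p)) :
    belochF p q (p + u) (q + t * u) = 0 := by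
  rw [belochF_add, belochQuad]
  linear_combination (-u ^ 2) * h

theorem exists_pos_mul_add_lt {c ε : ℝ} (hε : 0 < ε) : ∃ s > (0 : ℝ), s * (s + c) < ε := by
  have hlim : Tendsto (fun s : ℝ => s * (s + c)) (𝓝[>] 0) (𝓝 0) := by
    have hcont : Continuous fun s : ℝ => s * (s + c) := by fun_prop
    simpa using (hcont.tendsto 0).mono_left nhdsWithin_le_nhds
  obtain ⟨s, hs, hs0⟩ := ((hlim.eventually (gt_mem_nhds hε)).and self_mem_nhdsWithin).exists
  exact ⟨s, hs0, hs⟩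

theorem belochF_not_isolated {p q : ℝ} (h : 0 ≤ 4 * p + q ^ 2) {ε : ℝ} (hε : 0 < ε) :
    ∃ x y : ℝ, belochF p q x y = 0 ∧ √((x - p) ^ 2 + (y - q) ^ 2) < ε ∧ (x, y) ≠ (p, q) := by
  set d := √(4 * p + q ^ 2)
  have hd : d ^ 2 = 4 * p + q ^ 2 := Real.sq_sqrt h
  obtain ⟨s, hs, hsε⟩ := exists_pos_mul_add_lt (c := d) (half_pos hε)
  -- `(q + d) / 2` is a root of `t² - qt - p`
  set t := (q + d) / 2 + s
  set m := s * (s + d)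
  have hm : 0 < m := mul_pos hs (by positivity)
  have ht : t ^ 2 - q * t - p = m := by linear_combination (1 / 4 : ℝ) * hd
  have ht1 : 0 < 1 + t ^ 2 := by positivity
  set u := 2 * m / (1 + t ^ 2)
  have hu : u * (1 + t ^ 2) = 2 * m := div_mul_cancel₀ _ ht1.ne'
  have hu0 : 0 < u := by positivity
  have hu2m : u ≤ 2 * m := div_le_self (by positivity) (by nlinarith)
  refine ⟨p + u, q + t * u, belochF_add_mul_eq_zero (by rw [hu, ht]), ?_, ?_⟩
  · rw [Real.sqrt_lt' hε]
    nlinarith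
  · simp [hu0.ne']

/-- The Hessian determinant of `F` at the singular point `(p,q)` equals
`-4(4p + q²)`, and `(p,q)` is an isolated point of Beloch's curve (for the
Euclidean norm) iff `4p + q² < 0`. -/
theorem stmt_17 (p q : ℝ) :
    (deriv (deriv (fun x => belochF p q x q)) p *
        deriv (deriv (fun y => belochF p q p y)) q -
      (deriv (fun y => deriv (fun x => belochF p q x y) p) q) ^ 2 =
        -4 * (4 * p + q ^ 2)) ∧
    ((∃ ε > (0 : ℝ), ∀ x y : ℝ, belochF p q x y = 0 →
        Real.sqrt ((x - p) ^ 2 + (y - q) ^ 2) < ε → (x, y) = (p, q)) ↔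
      4 * p + q ^ 2 < 0) := by
  refine ⟨?_, fun ⟨ε, hε, hiso⟩ => ?_, belochF_isolated⟩
  · rw [deriv_deriv_belochF_fst, deriv_deriv_belochF_snd, deriv_deriv_belochF_fst_snd]
    ring
  · by_contra hD
    obtain ⟨x, y, hF, hr, hne⟩ := belochF_not_isolated (not_lt.mp hD) hε
    exact hne (hiso x y hF hr)
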